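/- arXiv:2502.16875 — 2 statements merged into one kernel-verified Lean document; each statement's English description precedes it below -/
import Mathlib

section
/- Let k be a field and let A be the 2-dimensional k-vector space with basis {x, y}. Let Δ : A → A ⊗ A be the linear map with Δx = 0 and Δy = y⊗y. Then for each of the following two multiplication tables (with parameter b ∈ k, resp. c ∈ k): (i) x² = 0, xy = 0, yx = bx, y² = 0; (ii) x² = 0, xy = cx, yx = 0, y² = y, the map Δ is coassociative, Δ(ab) = Δ(a)Δ(b) for all a, b ∈ A, and the self-distributivity identity holds: for all a, b ∈ A, (a·b)·y = (a·y)·(b·y) and (a·b)·x = 0. -/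
/-!
Coassociativity is linear in its argument, and multiplicativity of `Δ` and both
self-distributivity identities are bilinear in `(u, v)`, so each needs checking only on the
basis `{x, y}`, where it is a finite computation with the multiplication table.
-/

open TensorProduct

section

variable {k A : Type*} [CommSemiring k] [AddCommMonoid A] [Module k A]

theorem coassoc_of_basis {ι : Type*} (B : Module.Basis ι k A) (Δ : A →ₗ[k] A ⊗[k] A)
    (hB : ∀ i, Δ (B i) = 0 ∨ Δ (B i) = B i ⊗ₜ B i) :
    (TensorProduct.assoc k A A A).toLinearMap ∘ₗ Δ.rTensor A ∘ₗ Δ = Δ.lTensor A ∘ₗ Δ := by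
  refine B.ext fun i => ?_
  rcases hB i with h | h <;> simp [h]

end

section

variable {k A C : Type*} [CommSemiring k]
  [NonUnitalNonAssocSemiring A] [Module k A] [SMulCommClass k A A] [IsScalarTower k A A]
  {ι : Type*} (B : Module.Basis ι k A)

theorem map_mul_of_basis [NonUnitalNonAssocSemiring C] [Module k C] [SMulCommClass k C C]
    [IsScalarTower k C C] (Δ : A →ₗ[k] C) (h : ∀ i j, Δ (B i * B j) = Δ (B i) * Δ (B j))
    (u v : A) : Δ (u * v) = Δ u * Δ v :=
  LinearMap.congr_fun₂ (f := (LinearMap.mul k A).compr₂ Δ)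
    (g := (LinearMap.mul k C).compl₁₂ Δ Δ) (LinearMap.ext_basis B B h) u v

theorem mul_mul_right_of_basis (z : A) (h : ∀ i j, B i * B j * z = B i * z * (B j * z))
    (u v : A) : u * v * z = u * z * (v * z) :=
  LinearMap.congr_fun₂ (f := (LinearMap.mul k A).compr₂ (LinearMap.mulRight k z))
    (g := (LinearMap.mul k A).compl₁₂ (LinearMap.mulRight k z) (LinearMap.mulRight k z))
    (LinearMap.ext_basis B B h) u v

theorem mul_mul_right_eq_zero_of_basis (z : A) (h : ∀ i j, B i * B j * z = 0)
    (u v : A) : u * v * z = 0 :=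
  LinearMap.congr_fun₂ (f := (LinearMap.mul k A).compr₂ (LinearMap.mulRight k z)) (g := 0)
    (LinearMap.ext_basis B B h) u v

end

open TensorProduct in
/-- With comultiplication `Δx = 0, Δy = y⊗y`, each of the two
multiplication tables (i) `x² = 0, xy = 0, yx = b•x, y² = 0` and
(ii) `x² = 0, xy = c•x, yx = 0, y² = y` yields a (non-counital)
self-distributive bialgebra. -/
theorem stmt_11 (k A : Type*) [Field k] (b c : k)
    [NonUnitalNonAssocRing A] [Module k A]
    [SMulCommClass k A A] [IsScalarTower k A A]
    (B : Module.Basis (Fin 2) k A) (x y : A) (hx : x = B 0) (hy : y = B 1)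
    (Δ : A →ₗ[k] A ⊗[k] A)
    (hΔx : Δ x = 0) (hΔy : Δ y = y ⊗ₜ[k] y) :
    ((x * x = 0 ∧ x * y = 0 ∧ y * x = b • x ∧ y * y = 0) →
      ((TensorProduct.assoc k A A A).toLinearMap ∘ₗ Δ.rTensor A ∘ₗ Δ = Δ.lTensor A ∘ₗ Δ)
      ∧ (∀ u v : A, Δ (u * v) = Δ u * Δ v)
      ∧ (∀ u v : A, (u * v) * y = (u * y) * (v * y) ∧ (u * v) * x = 0)) ∧
    ((x * x = 0 ∧ x * y = c • x ∧ y * x = 0 ∧ y * y = y) →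
      ((TensorProduct.assoc k A A A).toLinearMap ∘ₗ Δ.rTensor A ∘ₗ Δ = Δ.lTensor A ∘ₗ Δ)
      ∧ (∀ u v : A, Δ (u * v) = Δ u * Δ v)
      ∧ (∀ u v : A, (u * v) * y = (u * y) * (v * y) ∧ (u * v) * x = 0)) := by
  subst hx hy
  have hcoassoc := coassoc_of_basis B Δ (by simp [Fin.forall_fin_two, hΔx, hΔy])
  constructor <;> rintro ⟨hxx, hxy, hyx, hyy⟩ <;>
    refine ⟨hcoassoc, map_mul_of_basis B Δ ?_, fun u v =>
      ⟨mul_mul_right_of_basis B _ ?_ u v, mul_mul_right_eq_zero_of_basis B _ ?_ u v⟩⟩ <;>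
    simp [Fin.forall_fin_two, hΔx, hΔy, hxx, hxy, hyx, hyy, smul_mul_assoc, mul_smul_comm,
      Algebra.TensorProduct.tmul_mul_tmul]
end

section
/- Let k be a field, let a₁, a₂ ∈ k with a₂ ≠ 0, and let A be the 2-dimensional k-vector space with basis {x, y} and the k-bilinear multiplication determined by x² = a₁x + a₂y, xy = 0, yx = −(a₁²/a₂)x − a₁y, y² = 0. Then (a·b)·c = 0 for all a, b, c ∈ A; consequently, together with the zero comultiplication Δ = 0, A is a self-distributive bialgebra. -/
/-!
Every product of basis vectors is a multiple of `x²`: `xy = y² = 0` and, since `a₂ ≠ 0`,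
`yx = -(a₁/a₂) x²`. By bilinearity `A·A ⊆ k x²`, and `x²` is a left annihilator of `x` and `y`
(for `x² x` the two terms cancel), hence of all of `A`.
-/

section

variable {k A ι : Type*} [CommRing k] [NonUnitalNonAssocRing A] [Module k A]
  [SMulCommClass k A A]

theorem mul_eq_zero_of_mul_basis_eq_zero (B : Module.Basis ι k A) {v : A}
    (hv : ∀ i, v * B i = 0) (c : A) : v * c = 0 := by
  have : LinearMap.mulLeft k v = 0 := B.ext hv
  simpa using LinearMap.congr_fun this c

theorem mul_mem_of_basis_mul_basis_mem [IsScalarTower k A A] (B : Module.Basis ι k A)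
    {p : Submodule k A} (hp : ∀ i j, B i * B j ∈ p) (a b : A) : a * b ∈ p := by
  have : (LinearMap.mul k A).compr₂ p.mkQ = 0 := by
    refine LinearMap.ext_basis B B fun i j => ?_
    simpa using hp i j
  simpa using LinearMap.congr_fun₂ this a b

theorem mul_mul_eq_zero_of_basis [IsScalarTower k A A] (B : Module.Basis ι k A) {v : A}
    (hmem : ∀ i j, B i * B j ∈ k ∙ v) (hv : ∀ i, v * B i = 0) (a b c : A) :
    a * b * c = 0 := by
  obtain ⟨t, ht⟩ := Submodule.mem_span_singleton.mp (mul_mem_of_basis_mul_basis_mem B hmem a b)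
  rw [← ht, smul_mul_assoc, mul_eq_zero_of_mul_basis_eq_zero B hv, smul_zero]

end

/-- The 2-dimensional algebra with basis `{x, y}`, `a₂ ≠ 0`, and
multiplication `x² = a₁•x + a₂•y, xy = 0, yx = −(a₁²/a₂)•x − a₁•y, y² = 0`
satisfies `(a·b)·c = 0` for all `a, b, c`; hence with zero comultiplication it
is a self-distributive bialgebra. -/
theorem stmt_13 (k A : Type*) [Field k] (a₁ a₂ : k) (ha₂ : a₂ ≠ 0)
    [NonUnitalNonAssocRing A] [Module k A]
    [SMulCommClass k A A] [IsScalarTower k A A]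
    (B : Module.Basis (Fin 2) k A) (x y : A) (hx : x = B 0) (hy : y = B 1)
    (hxx : x * x = a₁ • x + a₂ • y) (hxy : x * y = 0)
    (hyx : y * x = (-(a₁ ^ 2 / a₂)) • x - a₁ • y) (hyy : y * y = 0) :
    ∀ a b c : A, (a * b) * c = 0 := by
  have hyx_smul : y * x = (-(a₁ / a₂)) • (x * x) := by
    rw [hyx, hxx, smul_add, smul_smul, smul_smul]
    match_scalars <;> field_simp
  have hxxx : x * x * x = 0 := by
    rw [hxx, add_mul, smul_mul_assoc, smul_mul_assoc, hyx_smul, smul_smul, ← add_smul]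
    rw [mul_neg, mul_div_cancel₀ a₁ ha₂, add_neg_cancel, zero_smul]
  have hxxy : x * x * y = 0 := by
    rw [hxx, add_mul, smul_mul_assoc, smul_mul_assoc, hxy, hyy, smul_zero, smul_zero, add_zero]
  subst hx hy
  refine mul_mul_eq_zero_of_basis B (v := B 0 * B 0) ?_ (Fin.forall_fin_two.mpr ⟨hxxx, hxxy⟩)
  simp only [Fin.forall_fin_two, hxy, hyy, hyx_smul, Submodule.zero_mem,
    Submodule.mem_span_singleton_self, Submodule.smul_mem _ _ (Submodule.mem_span_singleton_self _),
    and_self]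
end
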